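/- arXiv:1803.03120 — 2 statements merged into one kernel-verified Lean document; each statement's English description precedes it below -/
import Mathlib

section
/- Let p_ζ(x) = (1/Σ_n) · (1−r²)/(1−2r cos θ₁ + r²)^{(n+1)/2} be the Poisson kernel on S^n with ζ = r·e₁, r = e^{−ρ} ∈ (0,1), and λ = (n−1)/2. Then the first directional Poisson wavelet g_ρ^{[1]}(x) := ρ · ∂/∂Θ|_{Θ=0} p_ζ(Υ_Θ x) has the explicit form g_ρ^{[1]}(x) = −(2ρ(λ+1) r (1−r²) sin θ₁) / (Σ_n (1−2r cos θ₁ + r²)^{λ+2}) · cos θ₂. -/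
/-!
The wavelet is a chain rule computation: as a function of `c = cos θ₁` the kernel is
`Σ_n⁻¹ (1 - r²) (1 - 2rc + r²)^{-(λ+1)}`, with derivative `2(λ+1) r (1 - r²) / (Σ_n (1 - 2rc + r²)^{λ+2})`,
and the rotated colatitude cosine `cos Θ cos θ₁ - sin Θ sin θ₁ cos θ₂` has derivative
`-sin θ₁ cos θ₂` at `Θ = 0`.
-/

open Real

/-- Surface area `Σ_n = 2π^{(n+1)/2}/Γ((n+1)/2)` of the unit sphere `Sⁿ ⊂ ℝ^{n+1}`. -/
noncomputable def sphereArea (n : ℕ) : ℝ :=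
  2 * Real.pi ^ (((n : ℝ) + 1) / 2) / Real.Gamma (((n : ℝ) + 1) / 2)

/-- Poisson kernel on `Sⁿ` at `ζ = r e₁`, as a function of `c = cos θ₁`. -/
noncomputable def poissonKernelSn (n : ℕ) (r : ℝ) (c : ℝ) : ℝ :=
  (1 / sphereArea n) * (1 - r ^ 2) / (1 - 2 * r * c + r ^ 2) ^ (((n : ℝ) + 1) / 2)

theorem sphereArea_pos (n : ℕ) : 0 < sphereArea n :=
  div_pos (by positivity) (Gamma_pos_of_pos (by positivity))

/-- `1 - 2rc + r² = (1 - rc)² + r²(1 - c²)`. -/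
theorem one_sub_two_mul_mul_add_sq_pos {r c : ℝ} (hr : |r| < 1) (hc : |c| ≤ 1) :
    0 < 1 - 2 * r * c + r ^ 2 := by
  have hrc : r * c < 1 := calc
    r * c ≤ |r| * |c| := abs_mul r c ▸ le_abs_self _
    _ ≤ |r| := mul_le_of_le_one_right (abs_nonneg r) hc
    _ < 1 := hr
  have hc2 : c ^ 2 ≤ 1 := sq_le_one_iff_abs_le_one c |>.mpr hc
  nlinarith [sq_nonneg r, sq_pos_of_pos (sub_pos.mpr hrc)]

theorem hasDerivAt_poissonKernelSn (n : ℕ) (r c : ℝ) (hD : 0 < 1 - 2 * r * c + r ^ 2) :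
    HasDerivAt (poissonKernelSn n r)
      ((n + 1) * r * (1 - r ^ 2) /
        (sphereArea n * (1 - 2 * r * c + r ^ 2) ^ (((n : ℝ) + 1) / 2 + 1))) c := by
  set e : ℝ := ((n : ℝ) + 1) / 2 with he
  have hlin : HasDerivAt (fun c => 1 - 2 * r * c + r ^ 2) (-(2 * r)) c := by
    simpa using ((hasDerivAt_id c).const_mul (2 * r)).const_sub 1 |>.add_const (r ^ 2)
  have hpow := hlin.rpow_const (p := e) (Or.inl hD.ne')
  refine ((hasDerivAt_const c (1 / sphereArea n * (1 - r ^ 2))).div hpow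
    (rpow_pos_of_pos hD e).ne').congr_deriv ?_
  have := sphereArea_pos n
  have := rpow_pos_of_pos hD e
  rw [rpow_add_one hD.ne', rpow_sub_one hD.ne', he]
  field_simp
  ring

theorem hasDerivAt_cos_mul_sub_sin_mul (a b : ℝ) :
    HasDerivAt (fun Θ => cos Θ * cos a - sin Θ * sin a * cos b) (-(sin a * cos b)) 0 :=
  (((hasDerivAt_cos 0).mul_const (cos a)).sub
    (((hasDerivAt_sin 0).mul_const (sin a)).mul_const (cos b))).congr_deriv (by simp)

theorem first_directional_poisson_wavelet_general (n : ℕ) (lam : ℝ)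
    (hlam : lam = ((n : ℝ) - 1) / 2) (ρ : ℝ) (hρ : 0 < ρ) (r : ℝ) (hr : r = Real.exp (-ρ))
    (θ₁ θ₂ : ℝ) :
    ρ * deriv (fun Θ => poissonKernelSn n r
        (Real.cos Θ * Real.cos θ₁ - Real.sin Θ * Real.sin θ₁ * Real.cos θ₂)) 0
      = -(2 * ρ * (lam + 1) * r * (1 - r ^ 2) * Real.sin θ₁)
          / (sphereArea n * (1 - 2 * r * Real.cos θ₁ + r ^ 2) ^ (lam + 2))
        * Real.cos θ₂ := by
  have hr1 : |r| < 1 := by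
    rw [hr, abs_of_pos (exp_pos _), exp_lt_one_iff]; linarith
  have hD := one_sub_two_mul_mul_add_sq_pos hr1 (abs_cos_le_one θ₁)
  have hchain : HasDerivAt
      (fun Θ => poissonKernelSn n r (cos Θ * cos θ₁ - sin Θ * sin θ₁ * cos θ₂)) _ 0 :=
    (hasDerivAt_poissonKernelSn n r _ (by simpa using hD)).comp 0
      (hasDerivAt_cos_mul_sub_sin_mul θ₁ θ₂)
  have hexp : ((n : ℝ) + 1) / 2 + 1 = lam + 2 := by rw [hlam]; ring
  have hcoef : (n : ℝ) + 1 = 2 * (lam + 1) := by rw [hlam]; ring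
  rw [hchain.deriv, hexp, hcoef]
  simp only [cos_zero, sin_zero, one_mul, zero_mul, sub_zero]
  ring

/-- Explicit form of the first directional Poisson wavelet
`g_ρ^{[1]}(x) = ρ · ∂/∂Θ|₀ p_ζ(Υ_Θ x)`; the rotated point `Υ_Θ x` has colatitude cosine
`cos Θ cos θ₁ − sin Θ sin θ₁ cos θ₂`. -/
theorem first_directional_poisson_wavelet (n : ℕ) (hn : 2 ≤ n) (lam : ℝ)
    (hlam : lam = ((n : ℝ) - 1) / 2) (ρ : ℝ) (hρ : 0 < ρ) (r : ℝ) (hr : r = Real.exp (-ρ))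
    (θ₁ θ₂ : ℝ) :
    ρ * deriv (fun Θ => poissonKernelSn n r
        (Real.cos Θ * Real.cos θ₁ - Real.sin Θ * Real.sin θ₁ * Real.cos θ₂)) 0
      = -(2 * ρ * (lam + 1) * r * (1 - r ^ 2) * Real.sin θ₁)
          / (sphereArea n * (1 - 2 * r * Real.cos θ₁ + r ^ 2) ^ (lam + 2))
        * Real.cos θ₂ :=
  first_directional_poisson_wavelet_general n lam hlam ρ hρ r hr θ₁ θ₂
end

section
/- Let p_ζ be the Poisson kernel on S^n at ζ = e^{−ρ} e₁ and S^{−1} the inverse stereographic projection from ℝ^n to S^n (with S^{−1}(0) = e₁). Then for every ξ ∈ ℝ^n, lim_{ρ→0⁺} ρ^n · p_{e^{−ρ}e₁}(S^{−1}(ρξ)) = 2/(Σ_n (1+|ξ|²)^{λ+1}), where λ = (n−1)/2 and Σ_n is the surface area of S^n. -/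
open Filter

/-- Poisson kernel on `Sⁿ` at `ζ = r e₁`, as a function of `c = cos θ₁`. -/
noncomputable def sphereStatPoissonKernel (n : ℕ) (r : ℝ) (c : ℝ) : ℝ :=
  (1 / sphereArea n) * (1 - r ^ 2) / (1 - 2 * r * c + r ^ 2) ^ (((n : ℝ) + 1) / 2)

/-!
With `r = e^{-ρ}` and `t = ρ‖ξ‖/2`, the squared distance `|ζ - x|² = 1 - 2r cos(2 arctan t) + r²`
equals `(1 - r)² + 4r t²/(1 + t²)`, so `|ζ - x|²/ρ² → 1 + ‖ξ‖²`, while `(1 - r²)/ρ → 2`.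
Since `ρⁿ · p = Σ_n⁻¹ ((1 - r²)/ρ) / (|ζ - x|²/ρ²)^{(n+1)/2}`, the limit follows by continuity.
-/

open Real Topology

theorem Real.one_sub_cos_two_mul_arctan (t : ℝ) :
    1 - cos (2 * arctan t) = 2 * t ^ 2 / (1 + t ^ 2) := by
  rw [cos_two_mul, cos_sq_arctan]
  field_simp
  ring

theorem one_sub_two_mul_cos_two_mul_arctan_add_sq (r t : ℝ) :
    1 - 2 * r * cos (2 * arctan t) + r ^ 2 = (1 - r) ^ 2 + 4 * r * t ^ 2 / (1 + t ^ 2) := by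
  linear_combination (2 * r) * one_sub_cos_two_mul_arctan t

theorem tendsto_exp_neg_nhds_zero : Tendsto (fun ρ : ℝ => exp (-ρ)) (𝓝 0) (𝓝 1) := by
  simpa using continuous_neg.rexp.tendsto 0

theorem tendsto_one_sub_exp_neg_div :
    Tendsto (fun ρ : ℝ => (1 - exp (-ρ)) / ρ) (𝓝[≠] 0) (𝓝 1) := by
  have hderiv : HasDerivAt (fun x : ℝ => exp (-x)) (-1) 0 := by
    simpa using (hasDerivAt_neg (0 : ℝ)).exp
  have hslope := hderiv.tendsto_slope_zero.neg
  rw [neg_neg] at hslope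
  refine hslope.congr fun ρ => ?_
  simp only [zero_add, neg_zero, exp_zero, smul_eq_mul]
  ring

theorem tendsto_poisson_denominator_div_sq (k : ℝ) :
    Tendsto (fun ρ : ℝ => (1 - 2 * exp (-ρ) * cos (2 * arctan (ρ * k / 2)) + exp (-ρ) ^ 2) / ρ ^ 2)
      (𝓝[≠] 0) (𝓝 (1 + k ^ 2)) := by
  have hstereo : Tendsto (fun ρ : ℝ => 1 + (ρ * k / 2) ^ 2) (𝓝[≠] 0) (𝓝 1) := by
    have : Continuous fun ρ : ℝ => 1 + (ρ * k / 2) ^ 2 := by fun_prop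
    simpa using (this.tendsto 0).mono_left nhdsWithin_le_nhds
  have hlim := (tendsto_one_sub_exp_neg_div.pow 2).add
    (((tendsto_exp_neg_nhds_zero.mono_left nhdsWithin_le_nhds).mul_const (k ^ 2)).div hstereo
      one_ne_zero)
  rw [show (1 : ℝ) ^ 2 + 1 * k ^ 2 / 1 = 1 + k ^ 2 by ring] at hlim
  refine hlim.congr' (eventually_nhdsWithin_of_forall fun ρ (hρ : ρ ≠ 0) => ?_)
  simp only [Pi.div_apply, one_sub_two_mul_cos_two_mul_arctan_add_sq]
  field_simp
  ring

theorem pow_mul_sphereStatPoissonKernel (n : ℕ) {ρ r c : ℝ} (hρ : 0 < ρ) (hc : |c| ≤ 1) :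
    ρ ^ n * sphereStatPoissonKernel n r c =
      1 / sphereArea n * ((1 - r ^ 2) / ρ) /
        ((1 - 2 * r * c + r ^ 2) / ρ ^ 2) ^ (((n : ℝ) + 1) / 2) := by
  have hD : 0 ≤ 1 - 2 * r * c + r ^ 2 := by
    have hrc : r * c ≤ |r| := (le_abs_self _).trans <| by
      rw [abs_mul]; exact mul_le_of_le_one_right (abs_nonneg r) hc
    nlinarith [sq_nonneg (1 - |r|), sq_abs r]
  have hρpow : (ρ ^ 2) ^ (((n : ℝ) + 1) / 2) = ρ ^ (n + 1) := by
    rw [← rpow_natCast ρ 2, ← rpow_mul hρ.le, ← rpow_natCast]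
    push_cast
    ring_nf
  rw [sphereStatPoissonKernel, div_rpow hD (sq_nonneg ρ), hρpow]
  field_simp
  ring

theorem poisson_kernel_euclidean_limit_general (n : ℕ) (lam : ℝ)
    (hlam : lam = ((n : ℝ) - 1) / 2) (ξ : EuclideanSpace ℝ (Fin n)) :
    Tendsto (fun ρ : ℝ => ρ ^ n * sphereStatPoissonKernel n (Real.exp (-ρ))
        (Real.cos (2 * Real.arctan (ρ * ‖ξ‖ / 2))))
      (nhdsWithin 0 (Set.Ioi 0))
      (nhds (2 / (sphereArea n * (1 + ‖ξ‖ ^ 2) ^ (lam + 1)))) := by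
  have hnum : Tendsto (fun ρ : ℝ => (1 - exp (-ρ) ^ 2) / ρ) (𝓝[>] 0) (𝓝 2) := by
    have h := (tendsto_one_sub_exp_neg_div.mono_left (nhdsGT_le_nhdsNE 0)).mul
      ((tendsto_exp_neg_nhds_zero.mono_left nhdsWithin_le_nhds).const_add 1)
    norm_num at h
    refine h.congr fun ρ => ?_
    ring
  have hden := ((tendsto_poisson_denominator_div_sq ‖ξ‖).mono_left (nhdsGT_le_nhdsNE 0)).rpow_const
    (p := ((n : ℝ) + 1) / 2) (Or.inl (by positivity))
  have hlim := ((tendsto_const_nhds (x := 1 / sphereArea n)).mul hnum).div hden (by positivity)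
  rw [show lam + 1 = ((n : ℝ) + 1) / 2 by rw [hlam]; ring, div_mul_eq_div_div,
    div_eq_mul_one_div 2, mul_comm]
  refine hlim.congr' (eventually_nhdsWithin_of_forall fun ρ (hρ : 0 < ρ) => ?_)
  exact (pow_mul_sphereStatPoissonKernel n hρ (abs_cos_le_one _)).symm

/-- Euclidean limit of the Poisson kernel: the inverse stereographic projection
`S⁻¹(ρξ)` has colatitude `θ₁ = 2 arctan(ρ‖ξ‖/2)`, so that
`ρⁿ p_{e^{-ρ}e₁}(S⁻¹(ρξ)) → 2/(Σ_n (1+‖ξ‖²)^{λ+1})` as `ρ → 0⁺`. -/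
theorem poisson_kernel_euclidean_limit (n : ℕ) (hn : 2 ≤ n) (lam : ℝ)
    (hlam : lam = ((n : ℝ) - 1) / 2) (ξ : EuclideanSpace ℝ (Fin n)) :
    Tendsto (fun ρ : ℝ => ρ ^ n * sphereStatPoissonKernel n (Real.exp (-ρ))
        (Real.cos (2 * Real.arctan (ρ * ‖ξ‖ / 2))))
      (nhdsWithin 0 (Set.Ioi 0))
      (nhds (2 / (sphereArea n * (1 + ‖ξ‖ ^ 2) ^ (lam + 1)))) :=
  poisson_kernel_euclidean_limit_general n lam hlam ξ
end
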